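/- For every positive integer n, the double inequality (2n + 2)(2n − 1)/π² · (2^{2n} − 1)/(2^{2n+2} − 1) < |B_{2n+2}|/|B_{2n}| < (2n + 2)(2n + 1)/π² · (2^{2n} − 1)/(2^{2n+2} − 1) holds, where B_m denotes the m-th Bernoulli number. -/

import Mathlib

/-!
With Dirichlet's `λ(m) = ∑ (2j+1)⁻ᵐ = (1 - 2⁻ᵐ) ζ(m)`, Euler's formula for `ζ(2n)` turns the ratio
`|B_{2n+2}| / |B_{2n}|` into `(2n+2)(2n+1)/π² · (2^{2n}-1)/(2^{2n+2}-1) · λ(2n+2)/λ(2n)`, so the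
claim becomes `(2n-1)/(2n+1) < λ(2n+2)/λ(2n) < 1`. The upper bound is the strict monotonicity of `λ`.
For the lower bound write `λ(m) = 1 + T(m)` with `T(m) = ∑_{j ≥ 1} (2j+1)⁻ᵐ`: since `m - 1 ≤ 3^{m-2}`,
`(m-1) T(m) ≤ T(2) = π²/8 - 1 < 2`, which gives `(m-1) λ(m) < (m+1) λ(m+2)`.
-/

open Real

noncomputable def dirichletLambda (m : ℕ) : ℝ := ∑' j : ℕ, 1 / (2 * (j : ℝ) + 1) ^ m

lemma summable_one_div_odd_pow {m : ℕ} (hm : 1 < m) :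
    Summable (fun j : ℕ => 1 / (2 * (j : ℝ) + 1) ^ m) := by
  have hinj : Function.Injective (fun j : ℕ => 2 * j + 1) := fun a b h => by simpa using h
  refine ((summable_one_div_nat_pow.mpr hm).comp_injective hinj).congr fun j => ?_
  simp

lemma two_pow_mul_dirichletLambda {m : ℕ} (hm : 1 < m) :
    2 ^ m * dirichletLambda m = (2 ^ m - 1) * ∑' k : ℕ, 1 / (k : ℝ) ^ m := by
  set f : ℕ → ℝ := fun k => 1 / (k : ℝ) ^ m
  have hs : Summable f := summable_one_div_nat_pow.mpr hm
  have hsplit := tsum_even_add_odd (f := f)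
    (hs.comp_injective fun a b h => by simpa using h)
    (hs.comp_injective fun a b h => by simpa using h)
  have heven : ∑' k, f (2 * k) = (2 ^ m)⁻¹ * ∑' k, f k := by
    rw [← tsum_mul_left]
    exact tsum_congr fun k => by simp only [f]; push_cast; rw [mul_pow]; field_simp
  rw [heven] at hsplit
  simp only [f] at hsplit
  push_cast at hsplit
  field_simp at hsplit
  rw [dirichletLambda]
  linarith

lemma one_le_dirichletLambda {m : ℕ} (hm : 1 < m) : 1 ≤ dirichletLambda m := by
  have := (summable_one_div_odd_pow hm).le_tsum 0 fun j _ => by positivity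
  simpa [dirichletLambda] using this

lemma dirichletLambda_two : dirichletLambda 2 = π ^ 2 / 8 := by
  have h := two_pow_mul_dirichletLambda one_lt_two
  rw [hasSum_zeta_two.tsum_eq] at h
  linarith

lemma dirichletLambda_lt_of_lt {m m' : ℕ} (hm : 1 < m) (hmm' : m < m') :
    dirichletLambda m' < dirichletLambda m := by
  refine (summable_one_div_odd_pow (hm.trans hmm')).tsum_lt_tsum (i := 1) (fun j => ?_) ?_
    (summable_one_div_odd_pow hm)
  · have hj : (1 : ℝ) ≤ 2 * j + 1 := by linarith [(j.cast_nonneg : (0 : ℝ) ≤ j)]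
    gcongr
  · norm_num
    gcongr
    norm_num

lemma dirichletLambda_eq_one_add {m : ℕ} (hm : 1 < m) :
    dirichletLambda m = 1 + ∑' j : ℕ, 1 / (2 * (j : ℝ) + 3) ^ m := by
  rw [dirichletLambda, (summable_one_div_odd_pow hm).tsum_eq_zero_add]
  norm_num
  exact tsum_congr fun j => by ring_nf

lemma summable_one_div_two_mul_add_three_pow {m : ℕ} (hm : 1 < m) :
    Summable (fun j : ℕ => 1 / (2 * (j : ℝ) + 3) ^ m) :=
  ((summable_nat_add_iff 1).mpr (summable_one_div_odd_pow hm)).congr fun j => by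
    push_cast; ring_nf

lemma succ_mul_one_div_pow_le (k : ℕ) {a : ℝ} (ha : 3 ≤ a) :
    ((k : ℝ) + 1) * (1 / a ^ (k + 2)) ≤ 1 / a ^ 2 := by
  have hk : (k : ℝ) + 1 ≤ a ^ k :=
    calc (k : ℝ) + 1 ≤ 1 + k * (a - 1) := by nlinarith [k.cast_nonneg (α := ℝ)]
      _ ≤ (1 + (a - 1)) ^ k := one_add_mul_le_pow (by linarith) k
      _ = a ^ k := by ring
  rw [pow_add, mul_one_div, div_le_div_iff₀ (by positivity) (by positivity), one_mul]
  exact mul_le_mul_of_nonneg_right hk (by positivity)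

lemma sub_one_mul_dirichletLambda_lt {m : ℕ} (hm : 2 ≤ m) :
    ((m : ℝ) - 1) * dirichletLambda m < (m + 1) * dirichletLambda (m + 2) := by
  obtain ⟨k, rfl⟩ : ∃ k, m = k + 2 := ⟨m - 2, by omega⟩
  set T : ℕ → ℝ := fun s => ∑' j : ℕ, 1 / (2 * (j : ℝ) + 3) ^ s
  have htail : ((k : ℝ) + 1) * T (k + 2) ≤ T 2 := by
    rw [← tsum_mul_left]
    refine (summable_one_div_two_mul_add_three_pow (by omega)).mul_left _ |>.tsum_le_tsum
      (fun j => succ_mul_one_div_pow_le k ?_) (summable_one_div_two_mul_add_three_pow one_lt_two)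
    linarith [j.cast_nonneg (α := ℝ)]
  have hT2 : T 2 = π ^ 2 / 8 - 1 := by
    linarith [dirichletLambda_eq_one_add one_lt_two, dirichletLambda_two]
  have hT_nonneg : 0 ≤ T (k + 4) := tsum_nonneg fun j => by positivity
  have hπ : π ^ 2 < 16 := by nlinarith [pi_lt_four, pi_pos]
  rw [dirichletLambda_eq_one_add (by omega), dirichletLambda_eq_one_add (by omega)]
  push_cast
  nlinarith [k.cast_nonneg (α := ℝ)]

open Nat in
lemma tsum_one_div_nat_pow_two_mul {n : ℕ} (hn : n ≠ 0) :
    ∑' k : ℕ, 1 / (k : ℝ) ^ (2 * n) =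
      (2 * π) ^ (2 * n) * |(bernoulli (2 * n) : ℝ)| / (2 * (2 * n)!) := by
  have hpos : 0 < ∑' k : ℕ, 1 / (k : ℝ) ^ (2 * n) := by
    have := (summable_one_div_nat_pow.mpr (by omega : 1 < 2 * n)).le_tsum 1
      fun j _ => by positivity
    simp only [Nat.cast_one, one_pow, div_one] at this
    linarith
  have hpow : (2 : ℝ) ^ (2 * n) = 2 * 2 ^ (2 * n - 1) := by
    rw [mul_pow_sub_one (by omega)]
  rw [← abs_of_pos hpos, (hasSum_zeta_nat hn).tsum_eq]
  simp only [abs_div, abs_mul, abs_pow, abs_neg, abs_one, one_pow, one_mul, Nat.abs_cast,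
    abs_two, abs_of_pos pi_pos]
  rw [mul_pow, hpow]
  field_simp

open Nat in
lemma abs_bernoulli_two_mul {n : ℕ} (hn : n ≠ 0) :
    |(bernoulli (2 * n) : ℝ)| =
      2 * (2 * n)! * dirichletLambda (2 * n) / ((2 ^ (2 * n) - 1) * π ^ (2 * n)) := by
  have h := two_pow_mul_dirichletLambda (m := 2 * n) (by omega)
  rw [tsum_one_div_nat_pow_two_mul hn, mul_pow] at h
  have h2 : (1 : ℝ) < 2 ^ (2 * n) := one_lt_pow₀ one_lt_two (by omega)
  have : (2 : ℝ) ^ (2 * n) - 1 ≠ 0 := by linarith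
  field_simp at h ⊢
  linarith

open Nat in
lemma abs_bernoulli_two_mul_add_two_div {n : ℕ} (hn : n ≠ 0) :
    |(bernoulli (2 * n + 2) : ℝ)| / |(bernoulli (2 * n) : ℝ)| =
      (2 * (n : ℝ) + 2) * (2 * n + 1) / π ^ 2 * ((2 ^ (2 * n) - 1) / (2 ^ (2 * n + 2) - 1)) *
        (dirichletLambda (2 * n + 2) / dirichletLambda (2 * n)) := by
  have hfac : ((2 * n + 2)! : ℝ) = (2 * n + 2) * (2 * n + 1) * (2 * n)! := by
    rw [factorial_succ, factorial_succ]; push_cast; ring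
  have h₁ : (1 : ℝ) < 2 ^ (2 * n) := one_lt_pow₀ one_lt_two (by omega)
  have h₂ : (1 : ℝ) < 2 ^ (2 * n + 2) := one_lt_pow₀ one_lt_two (by omega)
  rw [abs_bernoulli_two_mul hn, show 2 * n + 2 = 2 * (n + 1) by ring,
    abs_bernoulli_two_mul n.succ_ne_zero, ← show 2 * n + 2 = 2 * (n + 1) by ring, hfac]
  have : (2 : ℝ) ^ (2 * n) - 1 ≠ 0 := by linarith
  have : (2 : ℝ) ^ (2 * n + 2) - 1 ≠ 0 := by linarith
  field_simp
  ring

theorem stmt9 (n : ℕ) (hn : 1 ≤ n) :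
    (2 * (n : ℝ) + 2) * (2 * (n : ℝ) - 1) / π ^ 2 *
        (((2 : ℝ) ^ (2 * n) - 1) / ((2 : ℝ) ^ (2 * n + 2) - 1)) <
      |(bernoulli (2 * n + 2) : ℝ)| / |(bernoulli (2 * n) : ℝ)| ∧
    |(bernoulli (2 * n + 2) : ℝ)| / |(bernoulli (2 * n) : ℝ)| <
      (2 * (n : ℝ) + 2) * (2 * (n : ℝ) + 1) / π ^ 2 *
        (((2 : ℝ) ^ (2 * n) - 1) / ((2 : ℝ) ^ (2 * n + 2) - 1)) := by
  have hLpos : 0 < dirichletLambda (2 * n) := by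
    linarith [one_le_dirichletLambda (m := 2 * n) (by omega)]
  set r := dirichletLambda (2 * n + 2) / dirichletLambda (2 * n) with hr
  have hlower : 2 * (n : ℝ) - 1 < (2 * n + 1) * r := by
    rw [hr, ← mul_div_assoc, lt_div_iff₀ hLpos]
    exact_mod_cast sub_one_mul_dirichletLambda_lt (m := 2 * n) (by omega)
  have hupper : r < 1 := (div_lt_one hLpos).mpr (dirichletLambda_lt_of_lt (by omega) (by omega))
  set A := (2 * (n : ℝ) + 2) / π ^ 2 * ((2 ^ (2 * n) - 1) / (2 ^ (2 * n + 2) - 1)) with hA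
  have hApos : 0 < A := by
    have h₁ : (1 : ℝ) < 2 ^ (2 * n) := one_lt_pow₀ one_lt_two (by omega)
    have h₂ : (1 : ℝ) < 2 ^ (2 * n + 2) := one_lt_pow₀ one_lt_two (by omega)
    exact mul_pos (by positivity) (div_pos (by linarith) (by linarith))
  rw [abs_bernoulli_two_mul_add_two_div (by omega)]
  constructor
  · calc _ = A * (2 * n - 1) := by rw [hA]; ring
      _ < A * ((2 * n + 1) * r) := mul_lt_mul_of_pos_left hlower hApos
      _ = _ := by rw [hA]; ring
  · calc _ = A * (2 * n + 1) * r := by rw [hA]; ring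
      _ < A * (2 * n + 1) := mul_lt_of_lt_one_right (by positivity) hupper
      _ = _ := by rw [hA]; ring
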